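/- arXiv:1409.6259 — 3 statements merged into one kernel-verified Lean document; each statement's English description precedes it below -/
import Mathlib

section
/- Let A ∈ GL(2,ℂ) with |det A| = 1 and ‖A‖ > 1, let S be the most-contracted line of A (the eigenspace of A*A with eigenvalue ‖A‖⁻²), and let V be a complex line in ℂ² with ‖Av‖ = R‖v‖ for v ∈ V. Then the angle θ between V and S satisfies √((R² − ‖A‖⁻²)/(‖A‖² − ‖A‖⁻²)) ≤ θ ≤ (π/2)·√((R² − ‖A‖⁻²)/(‖A‖² − ‖A‖⁻²)). -/
/-!
The eigenvalues of `A*A` are `‖A‖²` and, since their product is `|det A|² = 1`, `‖A‖⁻²`.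
Writing a unit vector `v ∈ V` in an orthonormal eigenbasis `(u, s)` with `s ∈ S` gives
`R² = ‖Av‖² = ‖A‖² (1 - t²) + ‖A‖⁻² t²` with `t = |⟨v, s⟩| = cos θ`, so the ratio under the
square roots is `sin² θ`, and the claim is Jordan's inequality `sin θ ≤ θ ≤ (π/2) sin θ`
on `[0, π/2]`.
-/

open Matrix

noncomputable section

abbrev E2 := EuclideanSpace ℂ (Fin 2)

noncomputable def opNorm (M : Matrix (Fin 2) (Fin 2) ℂ) : ℝ :=
  ‖Matrix.toEuclideanCLM (𝕜 := ℂ) (n := Fin 2) M‖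

noncomputable def mulV (M : Matrix (Fin 2) (Fin 2) ℂ) (v : E2) : E2 :=
  Matrix.toEuclideanCLM (𝕜 := ℂ) (n := Fin 2) M v

/-- The most-contracted line of `A`: the eigenspace of `A*A` corresponding to the
eigenvalue `‖A‖⁻²`. -/
noncomputable def Sline (A : Matrix (Fin 2) (Fin 2) ℂ) : Submodule ℂ E2 :=
  Module.End.eigenspace
    ((Matrix.toEuclideanCLM (𝕜 := ℂ) (n := Fin 2) (Aᴴ * A)).toLinearMap)
    ((((opNorm A) ^ 2)⁻¹ : ℝ) : ℂ)

open Module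

open scoped InnerProductSpace

namespace Real

theorem sqrt_one_sub_sq_le_arccos (t : ℝ) : √(1 - t ^ 2) ≤ arccos t := by
  simpa only [sin_arccos] using sin_le (arccos_nonneg t)

theorem arccos_le_pi_div_two_mul_sqrt_one_sub_sq {t : ℝ} (ht : 0 ≤ t) :
    arccos t ≤ π / 2 * √(1 - t ^ 2) := by
  rw [← sin_arccos]
  have := mul_le_sin (arccos_nonneg t) (arccos_le_pi_div_two.mpr ht)
  rw [div_mul_eq_mul_div, div_le_iff₀ pi_pos] at this
  linarith

end Real

namespace LinearMap

variable {𝕜 E : Type*} [RCLike 𝕜] [NormedAddCommGroup E] [InnerProductSpace 𝕜 E]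
  [FiniteDimensional 𝕜 E] {n : ℕ}

theorem IsSymmetric.re_inner_apply_self_eq_sum {S : E →ₗ[𝕜] E} (hS : S.IsSymmetric)
    (hn : finrank 𝕜 E = n) (v : E) :
    RCLike.re ⟪S v, v⟫_𝕜 = ∑ i, hS.eigenvalues hn i * ‖⟪hS.eigenvectorBasis hn i, v⟫_𝕜‖ ^ 2 := by
  set b := hS.eigenvectorBasis hn
  have hterm : ∀ i, ⟪S v, b i⟫_𝕜 * ⟪b i, v⟫_𝕜 =
      ((hS.eigenvalues hn i * ‖⟪b i, v⟫_𝕜‖ ^ 2 : ℝ) : 𝕜) := fun i => by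
    rw [hS v, hS.apply_eigenvectorBasis, inner_smul_real_right, ← inner_conj_symm,
      RCLike.ofReal_mul, RCLike.ofReal_pow, ← RCLike.conj_mul, RCLike.real_smul_eq_coe_mul,
      mul_assoc]
  rw [← b.sum_inner_mul_inner, Finset.sum_congr rfl fun i _ => hterm i, ← RCLike.ofReal_sum,
    RCLike.ofReal_re]

theorem norm_apply_sq_eq_sum_eigenvalues_adjoint_comp_self (f : E →ₗ[𝕜] E)
    (hn : finrank 𝕜 E = n) (v : E) :
    ‖f v‖ ^ 2 = ∑ i, f.isSymmetric_adjoint_comp_self.eigenvalues hn i *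
      ‖⟪f.isSymmetric_adjoint_comp_self.eigenvectorBasis hn i, v⟫_𝕜‖ ^ 2 := by
  rw [← IsSymmetric.re_inner_apply_self_eq_sum, comp_apply, adjoint_inner_left,
    inner_self_eq_norm_sq]

theorem eigenvalues_adjoint_comp_self_eq_norm_sq (f : E →ₗ[𝕜] E) (hn : finrank 𝕜 E = n)
    (i : Fin n) :
    f.isSymmetric_adjoint_comp_self.eigenvalues hn i =
      ‖f (f.isSymmetric_adjoint_comp_self.eigenvectorBasis hn i)‖ ^ 2 := by
  rw [f.norm_apply_sq_eq_sum_eigenvalues_adjoint_comp_self hn, Finset.sum_eq_single i]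
  · simp
  · intro j _ hji
    simp [(OrthonormalBasis.orthonormal _).inner_eq_zero hji]
  · simp

theorem prod_eigenvalues_adjoint_comp_self (f : E →ₗ[𝕜] E) (hn : finrank 𝕜 E = n) :
    ∏ i, f.isSymmetric_adjoint_comp_self.eigenvalues hn i = ‖f.det‖ ^ 2 := by
  apply RCLike.ofReal_injective (K := 𝕜)
  rw [RCLike.ofReal_prod, ← IsSymmetric.det_eq_prod_eigenvalues, ← normDet_sq,
    normDet_eq_norm_det]

end LinearMap

namespace ContinuousLinearMap

variable {𝕜 E : Type*} [RCLike 𝕜] [NormedAddCommGroup E] [InnerProductSpace 𝕜 E]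
  [FiniteDimensional 𝕜 E]

theorem eigenvalues_adjoint_comp_self_zero {n : ℕ} (T : E →L[𝕜] E) (hn : finrank 𝕜 E = n + 1) :
    (T : E →ₗ[𝕜] E).isSymmetric_adjoint_comp_self.eigenvalues hn 0 = ‖T‖ ^ 2 := by
  set hS := (T : E →ₗ[𝕜] E).isSymmetric_adjoint_comp_self
  set b := hS.eigenvectorBasis hn
  have hμ0 := (T : E →ₗ[𝕜] E).eigenvalues_adjoint_comp_self_eq_norm_sq hn 0
  rw [coe_coe] at hμ0
  apply le_antisymm
  · rw [hμ0]
    gcongr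
    simpa [b.norm_eq_one] using T.le_opNorm (b 0)
  · have hμ0_nonneg : 0 ≤ hS.eigenvalues hn 0 := hμ0 ▸ sq_nonneg _
    refine (Real.le_sqrt (norm_nonneg _) hμ0_nonneg).mp (T.opNorm_le_bound (Real.sqrt_nonneg _)
      fun v => ?_)
    rw [← Real.sqrt_sq (norm_nonneg v), ← Real.sqrt_mul hμ0_nonneg,
      Real.le_sqrt (norm_nonneg _) (by positivity)]
    calc ‖T v‖ ^ 2 = ∑ i, hS.eigenvalues hn i * ‖⟪b i, v⟫_𝕜‖ ^ 2 :=
          (T : E →ₗ[𝕜] E).norm_apply_sq_eq_sum_eigenvalues_adjoint_comp_self hn v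
      _ ≤ ∑ i, hS.eigenvalues hn 0 * ‖⟪b i, v⟫_𝕜‖ ^ 2 := Finset.sum_le_sum fun i _ => by
          gcongr
          exact hS.eigenvalues_antitone hn (Fin.zero_le i)
      _ = hS.eigenvalues hn 0 * ‖v‖ ^ 2 := by rw [← Finset.mul_sum, b.sum_sq_norm_inner_right]

theorem exists_mem_eigenspace_adjoint_comp_self_of_finrank_eq_two (T : E →L[𝕜] E)
    (hn : finrank 𝕜 E = 2) (hdet : ‖(T : E →ₗ[𝕜] E).det‖ = 1) :
    ∃ s : E, ‖s‖ = 1 ∧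
      s ∈ End.eigenspace (LinearMap.adjoint (T : E →ₗ[𝕜] E) ∘ₗ T) (((‖T‖ ^ 2)⁻¹ : ℝ) : 𝕜) ∧
      ∀ v, ‖T v‖ ^ 2 = ‖T‖ ^ 2 * (‖v‖ ^ 2 - ‖⟪s, v⟫_𝕜‖ ^ 2) + (‖T‖ ^ 2)⁻¹ * ‖⟪s, v⟫_𝕜‖ ^ 2 := by
  set hS := (T : E →ₗ[𝕜] E).isSymmetric_adjoint_comp_self
  set b := hS.eigenvectorBasis hn
  have h0 : hS.eigenvalues hn 0 = ‖T‖ ^ 2 := T.eigenvalues_adjoint_comp_self_zero hn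
  have h1 : hS.eigenvalues hn 1 = (‖T‖ ^ 2)⁻¹ := by
    rw [← h0]
    refine eq_inv_of_mul_eq_one_right ?_
    rw [← Fin.prod_univ_two, LinearMap.prod_eigenvalues_adjoint_comp_self, hdet, one_pow]
  refine ⟨b 1, b.norm_eq_one 1, h1 ▸ (hS.hasEigenvector_eigenvectorBasis hn 1).1, fun v => ?_⟩
  have hsum := b.sum_sq_norm_inner_right v
  rw [Fin.sum_univ_two] at hsum
  rw [← coe_coe, LinearMap.norm_apply_sq_eq_sum_eigenvalues_adjoint_comp_self _ hn,
    Fin.sum_univ_two, h0, h1, ← hsum]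
  ring

end ContinuousLinearMap

theorem Submodule.exists_mem_norm_eq_one_of_ne_bot {𝕜 F : Type*} [RCLike 𝕜]
    [NormedAddCommGroup F] [NormedSpace 𝕜 F] {V : Submodule 𝕜 F} (hV : V ≠ ⊥) :
    ∃ v ∈ V, ‖v‖ = 1 := by
  obtain ⟨w, hwV, hw⟩ := V.exists_mem_ne_zero_of_ne_bot hV
  exact ⟨_, V.smul_mem _ hwV, norm_smul_inv_norm hw⟩

theorem exists_norm_eq_one_mem_Sline (A : Matrix (Fin 2) (Fin 2) ℂ) (hdet : ‖A.det‖ = 1) :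
    ∃ s ∈ Sline A, ‖s‖ = 1 ∧ ∀ v, ‖mulV A v‖ ^ 2 =
      opNorm A ^ 2 * (‖v‖ ^ 2 - ‖⟪s, v⟫_ℂ‖ ^ 2) + (opNorm A ^ 2)⁻¹ * ‖⟪s, v⟫_ℂ‖ ^ 2 := by
  set T := toEuclideanCLM (𝕜 := ℂ) (n := Fin 2) A
  have hSline : Sline A =
      End.eigenspace (LinearMap.adjoint (T : E2 →ₗ[ℂ] E2) ∘ₗ T) (((‖T‖ ^ 2)⁻¹ : ℝ) : ℂ) := by
    rw [Sline, map_mul, ← star_eq_conjTranspose, map_star]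
    rfl
  have hdetT : ‖(T : E2 →ₗ[ℂ] E2).det‖ = 1 := by
    rw [coe_toEuclideanCLM_eq_toEuclideanLin, LinearMap.det_toLpLin, hdet]
  obtain ⟨s, hs1, hsS, hs⟩ :=
    T.exists_mem_eigenspace_adjoint_comp_self_of_finrank_eq_two finrank_euclideanSpace_fin hdetT
  exact ⟨s, hSline ▸ hsS, hs1, hs⟩

/-- if `‖Av‖ = R ‖v‖` on a complex line `V`, then the angle
`θ = ∠(V, S)` to the most contracted line `S` of `A` satisfies
`√((R² − ‖A‖⁻²)/(‖A‖² − ‖A‖⁻²)) ≤ θ ≤ (π/2) √((R² − ‖A‖⁻²)/(‖A‖² − ‖A‖⁻²))`. -/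
theorem angle_to_contracted_line (A : Matrix (Fin 2) (Fin 2) ℂ)
    (hdet : ‖A.det‖ = 1) (hnorm : 1 < opNorm A)
    (V : Submodule ℂ E2) (hV : Module.finrank ℂ V = 1)
    (R : ℝ) (hR : ∀ v ∈ V, ‖mulV A v‖ = R * ‖v‖)
    (θ : ℝ)
    (hθ : ∀ v ∈ V, ∀ s ∈ Sline A, ‖v‖ = 1 → ‖s‖ = 1 →
      θ = Real.arccos (‖inner (𝕜 := ℂ) v s‖)) :
    Real.sqrt ((R ^ 2 - ((opNorm A) ^ 2)⁻¹) / ((opNorm A) ^ 2 - ((opNorm A) ^ 2)⁻¹))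
      ≤ θ ∧
    θ ≤ (Real.pi / 2) *
      Real.sqrt ((R ^ 2 - ((opNorm A) ^ 2)⁻¹) / ((opNorm A) ^ 2 - ((opNorm A) ^ 2)⁻¹)) := by
  obtain ⟨s, hsS, hs1, hnorm_sq⟩ := exists_norm_eq_one_mem_Sline A hdet
  obtain ⟨v, hvV, hv1⟩ := V.exists_mem_norm_eq_one_of_ne_bot (by rintro rfl; simp at hV)
  set t := ‖⟪s, v⟫_ℂ‖
  have hθt : θ = Real.arccos t := by rw [hθ v hvV s hsS hv1 hs1, norm_inner_symm]
  have hR2 : R ^ 2 = opNorm A ^ 2 * (1 - t ^ 2) + (opNorm A ^ 2)⁻¹ * t ^ 2 := by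
    rw [← mul_one R, ← hv1, ← hR v hvV, hnorm_sq, hv1, one_pow]
  have hratio : (R ^ 2 - (opNorm A ^ 2)⁻¹) / (opNorm A ^ 2 - (opNorm A ^ 2)⁻¹) = 1 - t ^ 2 := by
    have hm : 1 < opNorm A ^ 2 := one_lt_pow₀ hnorm two_ne_zero
    have hgap : opNorm A ^ 2 - (opNorm A ^ 2)⁻¹ ≠ 0 :=
      (sub_pos.mpr ((inv_lt_one_of_one_lt₀ hm).trans hm)).ne'
    rw [div_eq_iff hgap, hR2]
    ring
  rw [hratio, hθt]
  exact ⟨Real.sqrt_one_sub_sq_le_arccos t,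
    Real.arccos_le_pi_div_two_mul_sqrt_one_sub_sq (norm_nonneg _)⟩

end
end

section
/- Let A ∈ GL(2,ℂ) with |det A| = 1 and ‖A‖ > 1, and let S(A), U(A) be the eigenspaces of A*A corresponding to eigenvalues ‖A‖⁻² and ‖A‖² respectively. Then A·S(A) = U(A⁻¹) and A·U(A) = S(A⁻¹). -/
open Matrix

noncomputable section

/-- The most-expanded line of `A`: eigenspace of `A*A` for eigenvalue `‖A‖²`. -/
noncomputable def Uline (A : Matrix (Fin 2) (Fin 2) ℂ) : Submodule ℂ E2 :=
  Module.End.eigenspace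
    ((Matrix.toEuclideanCLM (𝕜 := ℂ) (n := Fin 2) (Aᴴ * A)).toLinearMap)
    (((opNorm A) ^ 2 : ℝ) : ℂ)

/-! For invertible `A`, the map `A` carries the `μ`-eigenspace of `A*A` onto the `μ`-eigenspace of
`AA* = A (A*A) A⁻¹`, which is the `μ⁻¹`-eigenspace of `(AA*)⁻¹ = (A⁻¹)*A⁻¹`. Hence `A·S(A)` and
`A·U(A)` are the eigenspaces of `(A⁻¹)*A⁻¹` for `‖A‖²` and `‖A‖⁻²`; these are `U(A⁻¹)` and
`S(A⁻¹)` because `‖A⁻¹‖ = ‖A‖`. The latter holds since a `2 × 2` matrix has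
`adj A = J Aᵀ J*` with `J` a rotation, so that `‖A⁻¹‖ = ‖adj A‖ / |det A| = ‖A‖ / |det A|`. -/

open WithLp
open scoped Matrix.Norms.L2Operator

namespace Module.End

theorem map_eigenspace_mul_swap {R M : Type*} [CommRing R] [AddCommGroup M] [Module R M]
    {u v : End R M} (huv : u * v = 1) (hvu : v * u = 1) (g : End R M) (μ : R) :
    (eigenspace (g * u) μ).map u = eigenspace (u * g) μ := by
  refine le_antisymm ?_ fun y hy ↦ ⟨v y, ?_, ?_⟩
  · rintro _ ⟨x, hx, rfl⟩
    rw [SetLike.mem_coe, mem_eigenspace_iff] at hx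
    rw [mem_eigenspace_iff, mul_apply, ← mul_apply g, hx, map_smul]
  · rw [mem_eigenspace_iff, mul_apply] at hy
    rw [SetLike.mem_coe, mem_eigenspace_iff, mul_apply, ← mul_apply u, huv, one_apply,
      ← one_apply (R := R) (g y), ← hvu, mul_apply, hy, map_smul]
  · rw [← mul_apply, huv, one_apply]

variable {K V : Type*} [Field K] [AddCommGroup V] [Module K V]

theorem eigenspace_le_eigenspace_inv {f g : End K V} (hgf : g * f = 1) (μ : K) :
    eigenspace f μ ≤ eigenspace g μ⁻¹ := by
  intro x hx
  rw [mem_eigenspace_iff] at hx ⊢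
  have hx' : x = μ • g x := by rw [← map_smul, ← hx, ← mul_apply, hgf, one_apply]
  rcases eq_or_ne μ 0 with rfl | hμ
  · rw [zero_smul] at hx'
    simp [hx']
  · exact (eq_inv_smul_iff₀ hμ).2 hx'.symm

theorem eigenspace_inv_eq {f g : End K V} (hgf : g * f = 1) (hfg : f * g = 1) (μ : K) :
    eigenspace g μ⁻¹ = eigenspace f μ :=
  le_antisymm (by simpa using eigenspace_le_eigenspace_inv hfg μ⁻¹)
    (eigenspace_le_eigenspace_inv hgf μ)

end Module.End

theorem EuclideanSpace.norm_toLp_star {𝕜 n : Type*} [RCLike 𝕜] [Fintype n] (v : n → 𝕜) :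
    ‖toLp 2 (star v)‖ = ‖toLp 2 v‖ := by
  simp [EuclideanSpace.norm_eq]

namespace Matrix

variable {𝕜 : Type*} [RCLike 𝕜]

theorem map_star_mulVec {m n : Type*} [Fintype n] (A : Matrix m n 𝕜) (v : n → 𝕜) :
    A.map star *ᵥ v = star (A *ᵥ star v) := by
  ext i
  simp [mulVec, dotProduct, star_sum]

section Rectangular

variable {m n : Type*} [Fintype m] [Fintype n] [DecidableEq m] [DecidableEq n]

omit [DecidableEq m] in
theorem l2_opNorm_map_star_le (A : Matrix m n 𝕜) : ‖A.map star‖ ≤ ‖A‖ := by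
  rw [l2_opNorm_def]
  refine ContinuousLinearMap.opNorm_le_bound _ (norm_nonneg _) fun x ↦ ?_
  rw [LinearEquiv.trans_apply, LinearMap.coe_toContinuousLinearMap', toLpLin_apply,
    map_star_mulVec, EuclideanSpace.norm_toLp_star]
  simpa [EuclideanSpace.norm_toLp_star] using A.l2_opNorm_mulVec (toLp 2 (star (ofLp x)))

theorem l2_opNorm_transpose_le (A : Matrix m n 𝕜) : ‖Aᵀ‖ ≤ ‖A‖ := by
  have h : Aᵀ = Aᴴ.map star := by
    ext i j
    simp
  rw [h, ← l2_opNorm_conjTranspose A]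
  exact l2_opNorm_map_star_le Aᴴ

theorem l2_opNorm_transpose (A : Matrix m n 𝕜) : ‖Aᵀ‖ = ‖A‖ :=
  le_antisymm (l2_opNorm_transpose_le A) (by simpa using l2_opNorm_transpose_le Aᵀ)

end Rectangular

theorem adjugate_fin_two_eq_mul_transpose_mul (A : Matrix (Fin 2) (Fin 2) 𝕜) :
    A.adjugate = !![0, 1; -1, 0] * Aᵀ * (!![0, 1; -1, 0])ᴴ := by
  ext i j
  fin_cases i <;> fin_cases j <;>
    simp [adjugate_fin_two, mul_apply, vecMul, dotProduct, Fin.sum_univ_two]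

theorem fin_two_rotation_mem_unitary :
    (!![0, 1; -1, 0] : Matrix (Fin 2) (Fin 2) 𝕜) ∈ unitary (Matrix (Fin 2) (Fin 2) 𝕜) := by
  rw [← unitaryGroup, mem_unitaryGroup_iff, star_eq_conjTranspose]
  ext i j
  fin_cases i <;> fin_cases j <;> simp [mul_apply, Fin.sum_univ_two]

theorem l2_opNorm_adjugate_fin_two (A : Matrix (Fin 2) (Fin 2) 𝕜) : ‖A.adjugate‖ = ‖A‖ := by
  have hJ := fin_two_rotation_mem_unitary (𝕜 := 𝕜)
  rw [adjugate_fin_two_eq_mul_transpose_mul, ← star_eq_conjTranspose,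
    CStarRing.norm_mul_mem_unitary _ (Unitary.star_mem hJ), CStarRing.norm_mem_unitary_mul _ hJ,
    l2_opNorm_transpose]

theorem l2_opNorm_inv_fin_two (A : Matrix (Fin 2) (Fin 2) 𝕜) : ‖A⁻¹‖ = ‖A‖ / ‖A.det‖ := by
  rw [inv_def, Ring.inverse_eq_inv', norm_smul, l2_opNorm_adjugate_fin_two, norm_inv,
    inv_mul_eq_div]

variable {n : Type*} [Fintype n] [DecidableEq n]

theorem toEuclideanCLM_toLinearMap_mul (M N : Matrix n n 𝕜) :
    (toEuclideanCLM (n := n) (𝕜 := 𝕜) (M * N)).toLinearMap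
      = (toEuclideanCLM (n := n) (𝕜 := 𝕜) M).toLinearMap
        * (toEuclideanCLM (n := n) (𝕜 := 𝕜) N).toLinearMap := by
  rw [map_mul]
  rfl

theorem map_eigenspace_conjTranspose_mul_self {A : Matrix n n 𝕜} (hA : IsUnit A.det) (μ : 𝕜) :
    (Module.End.eigenspace (toEuclideanCLM (n := n) (𝕜 := 𝕜) (Aᴴ * A)).toLinearMap μ).map
        (toEuclideanCLM (n := n) (𝕜 := 𝕜) A).toLinearMap
      = Module.End.eigenspace (toEuclideanCLM (n := n) (𝕜 := 𝕜) (A⁻¹ᴴ * A⁻¹)).toLinearMap μ⁻¹ := by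
  have hT {M N : Matrix n n 𝕜} (h : M * N = 1) :
      (toEuclideanCLM (n := n) (𝕜 := 𝕜) M).toLinearMap
        * (toEuclideanCLM (n := n) (𝕜 := 𝕜) N).toLinearMap = 1 := by
    rw [← toEuclideanCLM_toLinearMap_mul, h, map_one]
    rfl
  have hAAH : IsUnit (A * Aᴴ).det := by
    rw [det_mul, det_conjTranspose]
    exact hA.mul hA.star
  have hinv : (A * Aᴴ)⁻¹ = A⁻¹ᴴ * A⁻¹ := by
    rw [mul_inv_rev, conjTranspose_nonsing_inv]
  rw [toEuclideanCLM_toLinearMap_mul,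
    Module.End.map_eigenspace_mul_swap (hT (mul_nonsing_inv A hA)) (hT (nonsing_inv_mul A hA)),
    ← toEuclideanCLM_toLinearMap_mul, ← hinv,
    Module.End.eigenspace_inv_eq (hT (nonsing_inv_mul _ hAAH)) (hT (mul_nonsing_inv _ hAAH))]

end Matrix

theorem image_of_singular_lines_general (A : Matrix (Fin 2) (Fin 2) ℂ)
    (hdet : ‖A.det‖ = 1) :
    Submodule.map (Matrix.toEuclideanCLM (𝕜 := ℂ) (n := Fin 2) A).toLinearMap (Sline A)
        = Uline A⁻¹ ∧
    Submodule.map (Matrix.toEuclideanCLM (𝕜 := ℂ) (n := Fin 2) A).toLinearMap (Uline A)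
        = Sline A⁻¹ := by
  have hA : IsUnit A.det := by
    rw [isUnit_iff_ne_zero, ← norm_ne_zero_iff, hdet]
    exact one_ne_zero
  have hnorm_inv : opNorm A⁻¹ = opNorm A := by
    rw [opNorm, opNorm, ← cstar_norm_def, ← cstar_norm_def, l2_opNorm_inv_fin_two, hdet, div_one]
  rw [Sline, Uline, Sline, Uline, map_eigenspace_conjTranspose_mul_self hA,
    map_eigenspace_conjTranspose_mul_self hA, hnorm_inv, Complex.ofReal_inv, inv_inv]
  exact ⟨rfl, rfl⟩

/-- `A·S(A) = U(A⁻¹)` and `A·U(A) = S(A⁻¹)`. -/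
theorem image_of_singular_lines (A : Matrix (Fin 2) (Fin 2) ℂ)
    (hdet : ‖A.det‖ = 1) (hnorm : 1 < opNorm A) :
    Submodule.map (Matrix.toEuclideanCLM (𝕜 := ℂ) (n := Fin 2) A).toLinearMap (Sline A)
        = Uline A⁻¹ ∧
    Submodule.map (Matrix.toEuclideanCLM (𝕜 := ℂ) (n := Fin 2) A).toLinearMap (Uline A)
        = Sline A⁻¹ :=
  image_of_singular_lines_general A hdet

end
end

section
/- Let ℰ be an extended CMV matrix on ℓ²(ℤ) with Verblunsky coefficients α_n ∈ 𝔻. If z ∈ ∂𝔻 is a generalized eigenvalue of ℰ (i.e., there is a nonzero polynomially bounded sequence φ with ℰφ = zφ), then z belongs to the spectrum of ℰ. -/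
/-!
If `z ∉ σ(ℰ)` then `‖x‖ ≤ C ‖(z - ℰ) x‖` on `ℓ²(ℤ)`. Apply this to the truncation of `φ` to
`[-n-4, n+4]`: since `ℰ` is five-diagonal and `ℰφ = zφ` formally, the residual coincides, up to
coordinates where it vanishes, with that of the restriction of `φ` to the annulus `n < |k| ≤ n+4`.
Hence the partial masses `A n = ∑_{|k| ≤ n} |φ k|²` satisfy `A (n+4) ≤ K (A (n+4) - A n)`, so they
grow geometrically once positive, which the polynomial bound on `φ` forbids.
-/

noncomputable section

/-- `ρ_k = (1 − |α_k|²)^{1/2}`, as a complex number. -/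
noncomputable def rhoC (α : ℤ → ℂ) (k : ℤ) : ℂ :=
  ((Real.sqrt (1 - ‖α k‖ ^ 2) : ℝ) : ℂ)

/-- The `(m,n)` entry of the extended CMV matrix with Verblunsky
coefficients `α`. -/
noncomputable def cmvEntry (α : ℤ → ℂ) (m n : ℤ) : ℂ :=
  if m % 2 = 0 then
    if n = m - 1 then (starRingEnd ℂ) (α m) * rhoC α (m - 1)
    else if n = m then -((starRingEnd ℂ) (α m)) * α (m - 1)
    else if n = m + 1 then rhoC α m * (starRingEnd ℂ) (α (m + 1))
    else if n = m + 2 then rhoC α m * rhoC α (m + 1)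
    else 0
  else
    if n = m - 2 then rhoC α (m - 1) * rhoC α (m - 2)
    else if n = m - 1 then -(rhoC α (m - 1)) * α (m - 2)
    else if n = m then -(α (m - 1)) * (starRingEnd ℂ) (α m)
    else if n = m + 1 then -(α (m - 1)) * rhoC α m
    else 0

/-- The formal (pointwise) action of the extended CMV matrix on a
complex sequence; each row has at most five nonzero entries, located
in columns `m-2, …, m+2`. -/
noncomputable def cmvApply (α : ℤ → ℂ) (φ : ℤ → ℂ) (m : ℤ) : ℂ :=
  ∑ j ∈ Finset.Icc (m - 2) (m + 2), cmvEntry α m j * φ j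

/-- `φ : ℤ → ℂ` is polynomially bounded: `|φ_n| ≤ R (1+|n|)^S`. -/
def PolyBounded (φ : ℤ → ℂ) : Prop :=
  ∃ R S : ℝ, 0 < R ∧ 0 < S ∧
    ∀ n : ℤ, ‖φ n‖ ≤ R * Real.rpow (1 + (n.natAbs : ℝ)) S

open Filter Topology

lemma exists_norm_le_mul_norm_smul_sub_of_notMem_spectrum {𝕜 E : Type*}
    [NontriviallyNormedField 𝕜] [NormedAddCommGroup E] [NormedSpace 𝕜 E]
    {T : E →L[𝕜] E} {z : 𝕜} (hz : z ∉ spectrum 𝕜 T) :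
    ∃ C, 0 ≤ C ∧ ∀ x, ‖x‖ ≤ C * ‖z • x - T x‖ := by
  obtain ⟨u, hu⟩ := spectrum.notMem_iff.mp hz
  refine ⟨‖(↑u⁻¹ : E →L[𝕜] E)‖, norm_nonneg _, fun x => ?_⟩
  have hux : (u : E →L[𝕜] E) x = z • x - T x := by
    rw [hu, Algebra.algebraMap_eq_smul_one]
    rfl
  calc ‖x‖ = ‖(↑u⁻¹ : E →L[𝕜] E) ((u : E →L[𝕜] E) x)‖ := by
        rw [← mul_apply_eq_comp, u.inv_mul, one_apply_eq_self]
    _ ≤ ‖(↑u⁻¹ : E →L[𝕜] E)‖ * ‖z • x - T x‖ := by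
        rw [← hux]
        exact ContinuousLinearMap.le_opNorm _ _

section lpIndicator

variable {ι E : Type*} [DecidableEq ι] [NormedAddCommGroup E]

def lpIndicator (s : Finset ι) (f : ι → E) : lp (fun _ : ι => E) 2 :=
  ∑ k ∈ s, lp.single 2 k (f k)

lemma lpIndicator_apply (s : Finset ι) (f : ι → E) (j : ι) :
    lpIndicator s f j = if j ∈ s then f j else 0 := by
  rw [lpIndicator, lp.coeFn_sum]
  simp [Finset.sum_apply, lp.single_apply, Pi.single_apply]

lemma norm_lpIndicator_sq (s : Finset ι) (f : ι → E) :
    ‖lpIndicator s f‖ ^ 2 = ∑ k ∈ s, ‖f k‖ ^ 2 := by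
  simpa [lpIndicator, Real.rpow_two] using lp.norm_sum_single (p := 2) (by norm_num) f s

end lpIndicator

lemma exists_geometric_le_of_le_mul_sub {a : ℕ → ℝ} {K : ℝ} (ha : Monotone a)
    (h : ∀ t, a (t + 1) ≤ K * (a (t + 1) - a t)) : ∃ q > 1, ∀ t, q ^ t * a 0 ≤ a t := by
  set L := max K 2
  have hL : 2 ≤ L := le_max_right _ _
  have hstep : ∀ t, L / (L - 1) * a t ≤ a (t + 1) := by
    intro t
    have hLt : a (t + 1) ≤ L * (a (t + 1) - a t) :=
      (h t).trans (mul_le_mul_of_nonneg_right (le_max_left _ _) (sub_nonneg.2 (ha t.le_succ)))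
    rw [div_mul_eq_mul_div, div_le_iff₀ (by linarith)]
    linarith
  refine ⟨L / (L - 1), by rw [gt_iff_lt, one_lt_div (by linarith)]; linarith, fun t => ?_⟩
  induction t with
  | zero => simp
  | succ t ih => calc
      (L / (L - 1)) ^ (t + 1) * a 0 = L / (L - 1) * ((L / (L - 1)) ^ t * a 0) := by ring
      _ ≤ L / (L - 1) * a t := by
        gcongr
        exact div_nonneg (by linarith) (by linarith)
      _ ≤ a (t + 1) := hstep t

lemma nonpos_of_geometric_le_poly {c q B : ℝ} {N : ℕ} (hq : 1 < q)
    (h : ∀ t : ℕ, c * q ^ t ≤ B * ((t : ℝ) + 1) ^ N) : c ≤ 0 := by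
  have hlim : Tendsto (fun t : ℕ => B * q * (((t + 1 : ℕ) : ℝ) ^ N / q ^ (t + 1))) atTop (𝓝 0) := by
    simpa using ((tendsto_pow_const_div_const_pow_of_one_lt N hq).comp
      (tendsto_add_atTop_nat 1)).const_mul (B * q)
  refine ge_of_tendsto' hlim fun t => ?_
  have hqt : 0 < q ^ t := pow_pos (by linarith) t
  rw [show B * q * (((t + 1 : ℕ) : ℝ) ^ N / q ^ (t + 1)) = B * ((t : ℝ) + 1) ^ N / q ^ t by
    push_cast; field_simp; ring]
  exact (le_div_iff₀ hqt).2 (h t)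

section CMV

variable {α φ : ℤ → ℂ} {z : ℂ} {𝓔 : lp (fun _ : ℤ => ℂ) 2 →L[ℂ] lp (fun _ : ℤ => ℂ) 2}

lemma cmvApply_congr {ψ : ℤ → ℂ} {m : ℤ} (h : ∀ j ∈ Finset.Icc (m - 2) (m + 2), φ j = ψ j) :
    cmvApply α φ m = cmvApply α ψ m :=
  Finset.sum_congr rfl fun j hj => by rw [h j hj]

lemma smul_sub_apply_eq_of_cmvApply
    (h𝓔 : ∀ (ψ : lp (fun _ : ℤ => ℂ) 2) (m : ℤ), (𝓔 ψ) m = cmvApply α (⇑ψ) m)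
    (x : lp (fun _ : ℤ => ℂ) 2) (m : ℤ) :
    (z • x - 𝓔 x) m = z * x m - cmvApply α x m := by
  rw [lp.coeFn_sub, lp.coeFn_smul, Pi.sub_apply, Pi.smul_apply, smul_eq_mul, h𝓔]

lemma norm_smul_sub_lpIndicator_le
    (h𝓔 : ∀ (ψ : lp (fun _ : ℤ => ℂ) 2) (m : ℤ), (𝓔 ψ) m = cmvApply α (⇑ψ) m)
    (heig : ∀ m : ℤ, cmvApply α φ m = z * φ m) (n : ℕ) :
    ‖z • lpIndicator (Finset.Icc (-(n + 4 : ℤ)) (n + 4)) φ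
        - 𝓔 (lpIndicator (Finset.Icc (-(n + 4 : ℤ)) (n + 4)) φ)‖ ≤
      ‖z • lpIndicator (Finset.Icc (-(n + 4 : ℤ)) (n + 4) \ Finset.Icc (-(n : ℤ)) n) φ
        - 𝓔 (lpIndicator (Finset.Icc (-(n + 4 : ℤ)) (n + 4) \ Finset.Icc (-(n : ℤ)) n) φ)‖ := by
  set I := Finset.Icc (-(n + 4 : ℤ)) (n + 4)
  set J := Finset.Icc (-(n : ℤ)) n
  refine lp.norm_mono two_ne_zero fun m => ?_
  have hm_window : m ∈ Finset.Icc (m - 2) (m + 2) := Finset.mem_Icc.2 ⟨by omega, by omega⟩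
  rw [smul_sub_apply_eq_of_cmvApply h𝓔, smul_sub_apply_eq_of_cmvApply h𝓔]
  by_cases hm : m ∈ Finset.Icc (-(n + 2 : ℤ)) (n + 2)
  · have hI : ∀ j ∈ Finset.Icc (m - 2) (m + 2), lpIndicator I φ j = φ j := by
      intro j hj
      rw [Finset.mem_Icc] at hm hj
      rw [lpIndicator_apply, if_pos (Finset.mem_Icc.2 ⟨by omega, by omega⟩)]
    rw [hI m hm_window, cmvApply_congr hI, heig, sub_self, norm_zero]
    exact norm_nonneg _
  · have hIJ : ∀ j ∈ Finset.Icc (m - 2) (m + 2), lpIndicator I φ j = lpIndicator (I \ J) φ j := by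
      intro j hj
      have hjJ : j ∉ J := by
        rw [Finset.mem_Icc] at hm hj ⊢
        omega
      simp only [lpIndicator_apply, Finset.mem_sdiff, hjJ, not_false_eq_true, and_true]
    rw [hIJ m hm_window, cmvApply_congr hIJ]

def partialNormSq (φ : ℤ → ℂ) (n : ℕ) : ℝ :=
  ∑ k ∈ Finset.Icc (-(n : ℤ)) n, ‖φ k‖ ^ 2

lemma partialNormSq_mono (φ : ℤ → ℂ) : Monotone (partialNormSq φ) := fun m n hmn =>
  Finset.sum_le_sum_of_subset_of_nonneg (Finset.Icc_subset_Icc (by omega) (by omega))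
    fun _ _ _ => sq_nonneg _

lemma partialNormSq_natAbs_pos {k : ℤ} (hk : φ k ≠ 0) : 0 < partialNormSq φ k.natAbs :=
  Finset.sum_pos' (fun _ _ => sq_nonneg _)
    ⟨k, Finset.mem_Icc.2 ⟨by omega, by omega⟩, by positivity⟩

lemma partialNormSq_add_four_le
    (h𝓔 : ∀ (ψ : lp (fun _ : ℤ => ℂ) 2) (m : ℤ), (𝓔 ψ) m = cmvApply α (⇑ψ) m)
    (heig : ∀ m : ℤ, cmvApply α φ m = z * φ m) {C : ℝ} (hC0 : 0 ≤ C)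
    (hC : ∀ x, ‖x‖ ≤ C * ‖z • x - 𝓔 x‖) (n : ℕ) :
    partialNormSq φ (n + 4) ≤
      (C * (‖z‖ + ‖𝓔‖)) ^ 2 * (partialNormSq φ (n + 4) - partialNormSq φ n) := by
  set ψ := lpIndicator (Finset.Icc (-(n + 4 : ℤ)) (n + 4)) φ
  set b := lpIndicator (Finset.Icc (-(n + 4 : ℤ)) (n + 4) \ Finset.Icc (-(n : ℤ)) n) φ
  have hψ : ‖ψ‖ ^ 2 = partialNormSq φ (n + 4) := by
    rw [norm_lpIndicator_sq, partialNormSq]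
    push_cast
    rfl
  have hb : ‖b‖ ^ 2 = partialNormSq φ (n + 4) - partialNormSq φ n := by
    rw [norm_lpIndicator_sq, Finset.sum_sdiff_eq_sub (Finset.Icc_subset_Icc (by omega) (by omega)),
      partialNormSq, partialNormSq]
    push_cast
    rfl
  have hres : ‖z • b - 𝓔 b‖ ≤ (‖z‖ + ‖𝓔‖) * ‖b‖ := calc
    ‖z • b - 𝓔 b‖ ≤ ‖z • b‖ + ‖𝓔 b‖ := norm_sub_le _ _
    _ ≤ ‖z‖ * ‖b‖ + ‖𝓔‖ * ‖b‖ := by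
      rw [norm_smul]
      gcongr
      exact 𝓔.le_opNorm b
    _ = (‖z‖ + ‖𝓔‖) * ‖b‖ := by ring
  have hψb : ‖ψ‖ ≤ C * (‖z‖ + ‖𝓔‖) * ‖b‖ := calc
    ‖ψ‖ ≤ C * ‖z • ψ - 𝓔 ψ‖ := hC ψ
    _ ≤ C * ‖z • b - 𝓔 b‖ := by gcongr; exact norm_smul_sub_lpIndicator_le h𝓔 heig n
    _ ≤ C * ((‖z‖ + ‖𝓔‖) * ‖b‖) := by gcongr
    _ = C * (‖z‖ + ‖𝓔‖) * ‖b‖ := by ring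
  rw [← hb, ← hψ, ← mul_pow]
  exact pow_le_pow_left₀ (norm_nonneg _) hψb 2

lemma PolyBounded.exists_partialNormSq_le (hφ : PolyBounded φ) :
    ∃ B : ℝ, ∃ N : ℕ, 0 ≤ B ∧ ∀ n : ℕ, partialNormSq φ n ≤ B * ((n : ℝ) + 1) ^ N := by
  obtain ⟨R, S, hR, hS, hb⟩ := hφ
  refine ⟨2 * R ^ 2, 2 * ⌈S⌉₊ + 1, by positivity, fun n => ?_⟩
  have hterm : ∀ k ∈ Finset.Icc (-(n : ℤ)) n,
      ‖φ k‖ ^ 2 ≤ R ^ 2 * ((n : ℝ) + 1) ^ (2 * ⌈S⌉₊) := by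
    intro k hk
    have hkn : (k.natAbs : ℝ) ≤ n := by
      rw [Finset.mem_Icc] at hk
      exact_mod_cast (show k.natAbs ≤ n by omega)
    have hφk : ‖φ k‖ ≤ R * ((n : ℝ) + 1) ^ ⌈S⌉₊ := calc
      ‖φ k‖ ≤ R * (1 + (k.natAbs : ℝ)) ^ S := hb k
      _ ≤ R * ((n : ℝ) + 1) ^ S := by
        gcongr R * ?_
        exact Real.rpow_le_rpow (by positivity) (by linarith) hS.le
      _ ≤ R * ((n : ℝ) + 1) ^ (⌈S⌉₊ : ℝ) := by
        gcongr
        · linarith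
        · exact Nat.le_ceil S
      _ = R * ((n : ℝ) + 1) ^ ⌈S⌉₊ := by rw [Real.rpow_natCast]
    calc ‖φ k‖ ^ 2 ≤ (R * ((n : ℝ) + 1) ^ ⌈S⌉₊) ^ 2 := by gcongr
      _ = R ^ 2 * ((n : ℝ) + 1) ^ (2 * ⌈S⌉₊) := by ring
  have hcard : ((Finset.Icc (-(n : ℤ)) n).card : ℝ) = 2 * n + 1 := by
    rw [Int.card_Icc, show (n + 1 - -(n : ℤ)).toNat = 2 * n + 1 by omega]
    push_cast
    ring
  calc partialNormSq φ n
      ≤ (Finset.Icc (-(n : ℤ)) n).card • (R ^ 2 * ((n : ℝ) + 1) ^ (2 * ⌈S⌉₊)) :=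
        Finset.sum_le_card_nsmul _ _ _ hterm
    _ = (2 * n + 1) * (R ^ 2 * ((n : ℝ) + 1) ^ (2 * ⌈S⌉₊)) := by rw [nsmul_eq_mul, hcard]
    _ ≤ (2 * n + 2) * (R ^ 2 * ((n : ℝ) + 1) ^ (2 * ⌈S⌉₊)) := by gcongr; linarith
    _ = 2 * R ^ 2 * ((n : ℝ) + 1) ^ (2 * ⌈S⌉₊ + 1) := by ring

end CMV

theorem generalized_eigenvalue_mem_spectrum_general
    (α : ℤ → ℂ)
    (𝓔 : lp (fun _ : ℤ => ℂ) 2 →L[ℂ] lp (fun _ : ℤ => ℂ) 2)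
    (h𝓔 : ∀ (ψ : lp (fun _ : ℤ => ℂ) 2) (m : ℤ), (𝓔 ψ) m = cmvApply α (⇑ψ) m)
    (z : ℂ)
    (φ : ℤ → ℂ) (hφ0 : φ ≠ 0) (hpoly : PolyBounded φ)
    (heig : ∀ m : ℤ, cmvApply α φ m = z * φ m) :
    z ∈ spectrum ℂ 𝓔 := by
  by_contra hzσ
  obtain ⟨C, hC0, hC⟩ := exists_norm_le_mul_norm_smul_sub_of_notMem_spectrum hzσ
  obtain ⟨B, N, hB0, hB⟩ := hpoly.exists_partialNormSq_le
  obtain ⟨k, hk⟩ := Function.ne_iff.mp hφ0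
  set a : ℕ → ℝ := fun t => partialNormSq φ (k.natAbs + 4 * t)
  have ha_mono : Monotone a := (partialNormSq_mono φ).comp fun s t hst => by omega
  have ha_step (t : ℕ) : a (t + 1) ≤ (C * (‖z‖ + ‖𝓔‖)) ^ 2 * (a (t + 1) - a t) :=
    partialNormSq_add_four_le h𝓔 heig hC0 hC (k.natAbs + 4 * t)
  have ha_poly (t : ℕ) : a t ≤ B * (4 * (k.natAbs + 1)) ^ N * ((t : ℝ) + 1) ^ N := calc
    a t ≤ B * (((k.natAbs + 4 * t : ℕ) : ℝ) + 1) ^ N := hB _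
    _ ≤ B * (4 * (k.natAbs + 1) * ((t : ℝ) + 1)) ^ N := by gcongr; push_cast; nlinarith
    _ = B * (4 * (k.natAbs + 1)) ^ N * ((t : ℝ) + 1) ^ N := by rw [mul_pow, mul_assoc]
  obtain ⟨q, hq, ha_geom⟩ := exists_geometric_le_of_le_mul_sub ha_mono ha_step
  have ha0 : a 0 ≤ 0 :=
    nonpos_of_geometric_le_poly hq fun t => (mul_comm _ _).trans_le ((ha_geom t).trans (ha_poly t))
  exact (partialNormSq_natAbs_pos hk).not_ge ha0

/-- if `z ∈ ∂𝔻` is a generalized eigenvalue of an extended CMV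
matrix `ℰ` (there is a nonzero polynomially bounded `φ` with `ℰφ = zφ`), then
`z ∈ σ(ℰ)`. -/
theorem generalized_eigenvalue_mem_spectrum
    (α : ℤ → ℂ) (hα : ∀ n, ‖α n‖ < 1)
    (𝓔 : lp (fun _ : ℤ => ℂ) 2 →L[ℂ] lp (fun _ : ℤ => ℂ) 2)
    (h𝓔 : ∀ (ψ : lp (fun _ : ℤ => ℂ) 2) (m : ℤ), (𝓔 ψ) m = cmvApply α (⇑ψ) m)
    (z : ℂ) (hz : ‖z‖ = 1)
    (φ : ℤ → ℂ) (hφ0 : φ ≠ 0) (hpoly : PolyBounded φ)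
    (heig : ∀ m : ℤ, cmvApply α φ m = z * φ m) :
    z ∈ spectrum ℂ 𝓔 :=
  generalized_eigenvalue_mem_spectrum_general α 𝓔 h𝓔 z φ hφ0 hpoly heig

end
end
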